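/- arXiv:2309.16452 — 2 statements merged into one kernel-verified Lean document; each statement's English description precedes it below -/
import Mathlib

section
/- Under the hypotheses of the SCFE cost bound for linear models: if ‖w_NR − w_R‖₂ ≤ Δ, Δ < ‖w_NR‖₂, |m_NR| ≤ 1, |m_R| ≤ 1, λ > 0, then with ζ_NR = m_NR·(λ/(λ+‖w_NR‖₂²))·w_NR and ζ_R = m_R·(λ/(λ+‖w_R‖₂²))·w_R, one has |‖ζ_NR‖₂ − ‖ζ_R‖₂| ≤ λ(2‖w_NR‖₂ + Δ)/(‖w_NR‖₂·(‖w_NR‖₂ − Δ)). -/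
lemma scfe_aux (lam a M : ℝ) (hlam : 0 < lam) (ha : 0 < a) (hM : lam / a ≤ M) :
    lam * a / (lam + a ^ 2) ≤ M := by
  have h1 : lam * a / (lam + a ^ 2) ≤ lam / a := by
    rw [div_le_div_iff₀ (by positivity) ha]
    nlinarith
  linarith

/-- Theorem 1 of the paper: If `‖w_NR − w_R‖₂ ≤ Δ < ‖w_NR‖₂`,
`|m_NR| ≤ 1`, `|m_R| ≤ 1`, λ > 0, then the SCFE recourse costs satisfy
`|‖ζ_NR‖₂ − ‖ζ_R‖₂| ≤ λ(2‖w_NR‖₂ + Δ)/(‖w_NR‖₂·(‖w_NR‖₂ − Δ))`. -/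
theorem scfe_cost_diff_bound (d : ℕ) (wNR wR : EuclideanSpace ℝ (Fin d))
    (mNR mR lam Δ : ℝ) (hΔ : 0 ≤ Δ) (hw : ‖wNR - wR‖ ≤ Δ) (hΔlt : Δ < ‖wNR‖)
    (hmNR : |mNR| ≤ 1) (hmR : |mR| ≤ 1) (hlam : 0 < lam) :
    |‖(mNR * (lam / (lam + ‖wNR‖ ^ 2))) • wNR‖ -
        ‖(mR * (lam / (lam + ‖wR‖ ^ 2))) • wR‖| ≤
      lam * (2 * ‖wNR‖ + Δ) / (‖wNR‖ * (‖wNR‖ - Δ)) := by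
  set a := ‖wNR‖ with ha
  set b := ‖wR‖ with hb
  have ha0 : 0 < a := lt_of_le_of_lt hΔ hΔlt
  have hba : a - Δ ≤ b := by
    have := norm_sub_norm_le wNR wR
    linarith
  have hb0 : 0 < b := lt_of_lt_of_le (by linarith) hba
  set M := lam * (2 * a + Δ) / (a * (a - Δ)) with hMdef
  have hMa : lam / a ≤ M := by
    rw [hMdef, div_le_div_iff₀ ha0 (by nlinarith)]
    nlinarith [mul_pos hlam ha0, mul_nonneg (mul_pos hlam ha0).le hΔ, mul_pos (mul_pos hlam ha0) ha0]
  have hMb : lam / b ≤ M := by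
    have h1 : lam / b ≤ lam / (a - Δ) :=
      div_le_div_of_nonneg_left hlam.le (by linarith) hba
    have h2 : lam / (a - Δ) ≤ M := by
      rw [hMdef, div_le_div_iff₀ (by linarith) (by nlinarith)]
      nlinarith [mul_pos hlam (show (0:ℝ) < a - Δ by linarith), mul_nonneg (mul_nonneg hlam.le hΔ) (show (0:ℝ) ≤ a - Δ by linarith), mul_nonneg (mul_nonneg hlam.le hΔ) hΔ]
    linarith
  have key : ∀ (m c : ℝ) (w : EuclideanSpace ℝ (Fin d)), |m| ≤ 1 → 0 < c → 0 < ‖w‖ →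
      lam / ‖w‖ ≤ M → ‖(m * (lam / (lam + ‖w‖ ^ 2))) • w‖ ≤ M := by
    intro m c w hm hc hw0 hMw
    rw [norm_smul]
    have hpos : (0:ℝ) < lam / (lam + ‖w‖ ^ 2) := by positivity
    have : ‖m * (lam / (lam + ‖w‖ ^ 2))‖ ≤ lam / (lam + ‖w‖ ^ 2) := by
      rw [Real.norm_eq_abs, abs_mul, abs_of_pos hpos]
      nlinarith [abs_nonneg m]
    calc ‖m * (lam / (lam + ‖w‖ ^ 2))‖ * ‖w‖ ≤ (lam / (lam + ‖w‖ ^ 2)) * ‖w‖ := by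
            apply mul_le_mul_of_nonneg_right this (norm_nonneg w)
      _ = lam * ‖w‖ / (lam + ‖w‖ ^ 2) := by ring
      _ ≤ M := scfe_aux lam ‖w‖ M hlam hw0 hMw
  have h1 := key mNR 1 wNR hmNR one_pos ha0 hMa
  have h2 := key mR 1 wR hmR one_pos hb0 hMb
  rw [abs_sub_le_iff]
  constructor <;> nlinarith [norm_nonneg ((mNR * (lam / (lam + ‖wNR‖ ^ 2))) • wNR),
    norm_nonneg ((mR * (lam / (lam + ‖wR‖ ^ 2))) • wR)]
end

section
/- Let ζ_NR = ((s − a)/(λ + ‖u‖₂²))·u and ζ_R = ((s − b)/(λ + ‖v‖₂²))·v where |s−a| ≤ 1 and |s−b| ≤ 1, λ > 0, and u, v ∈ ℝ^d nonzero. Then |‖ζ_NR‖₂ − ‖ζ_R‖₂| ≤ 1/‖u‖₂ + 1/‖v‖₂ = 2/H(‖u‖₂, ‖v‖₂), where H(p,q) = 2pq/(p+q) is the harmonic mean. -/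
lemma scfe_bound (d : ℕ) (u : EuclideanSpace ℝ (Fin d)) (s a lam : ℝ)
    (ha : |s - a| ≤ 1) (hlam : 0 < lam) (hu : u ≠ 0) :
    ‖((s - a) / (lam + ‖u‖ ^ 2)) • u‖ ≤ 1 / ‖u‖ := by
  have hun : 0 < ‖u‖ := norm_pos_iff.mpr hu
  have hden : 0 < lam + ‖u‖ ^ 2 := by positivity
  rw [norm_smul, Real.norm_eq_abs, abs_div, abs_of_pos hden]
  have h1 : |s - a| / (lam + ‖u‖ ^ 2) * ‖u‖ ≤ ‖u‖ / (lam + ‖u‖ ^ 2) := by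
    rw [div_mul_eq_mul_div, mul_comm]
    gcongr
    · exact mul_le_of_le_one_right hun.le ha
  refine h1.trans ?_
  rw [div_le_div_iff₀ hden hun, one_mul]
  nlinarith
/-- Theorem 2 of the paper: With `ζ_NR = ((s−a)/(λ+‖u‖₂²))·u`,
`ζ_R = ((s−b)/(λ+‖v‖₂²))·v`, `|s−a| ≤ 1`, `|s−b| ≤ 1`, λ > 0 and nonzero `u, v`,
`|‖ζ_NR‖₂ − ‖ζ_R‖₂| ≤ 1/‖u‖₂ + 1/‖v‖₂ = 2/H(‖u‖₂,‖v‖₂)` where `H(p,q)=2pq/(p+q)`. -/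
theorem scfe_cost_diff_ntk (d : ℕ) (u v : EuclideanSpace ℝ (Fin d)) (s a b lam : ℝ)
    (ha : |s - a| ≤ 1) (hb : |s - b| ≤ 1) (hlam : 0 < lam)
    (hu : u ≠ 0) (hv : v ≠ 0) :
    |‖((s - a) / (lam + ‖u‖ ^ 2)) • u‖ - ‖((s - b) / (lam + ‖v‖ ^ 2)) • v‖| ≤
        1 / ‖u‖ + 1 / ‖v‖ ∧
    1 / ‖u‖ + 1 / ‖v‖ = 2 / (2 * ‖u‖ * ‖v‖ / (‖u‖ + ‖v‖)) := by
  have hun : 0 < ‖u‖ := norm_pos_iff.mpr hu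
  have hvn : 0 < ‖v‖ := norm_pos_iff.mpr hv
  constructor
  · have h1 := scfe_bound d u s a lam ha hlam hu
    have h2 := scfe_bound d v s b lam hb hlam hv
    have n1 : (0:ℝ) ≤ ‖((s - a) / (lam + ‖u‖ ^ 2)) • u‖ := norm_nonneg _
    have n2 : (0:ℝ) ≤ ‖((s - b) / (lam + ‖v‖ ^ 2)) • v‖ := norm_nonneg _
    rw [abs_sub_le_iff]
    constructor <;> linarith
  · field_simp
    ring
end
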